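/- For every m > n, the word w_m belongs to the language described by the regular expression (w_n (B + C + D))^* w_n; that is, w_m is a concatenation w_n β_1 w_n β_2 ⋯ β_k w_n with each β_i ∈ {B,C,D}. -/
import Mathlib


inductive GLetter | a | B | C | D
deriving DecidableEq

def alphaN (n : ℕ) : GLetter :=
  if n % 3 = 0 then GLetter.B else if n % 3 = 1 then GLetter.D else GLetter.C

def w : ℕ → List GLetter
  | 0 => []
  | 1 => [GLetter.a]
  | (n+2) => w (n+1) ++ [alphaN (n+1)] ++ w (n+1)

lemma alphaN_ne_a (n : ℕ) : alphaN n ≠ GLetter.a := by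
  unfold alphaN; split_ifs <;> simp

lemma w_succ (n : ℕ) (hn : 1 ≤ n) : w (n+1) = w n ++ [alphaN n] ++ w n := by
  obtain ⟨k, rfl⟩ := Nat.exists_eq_add_of_le hn
  rw [Nat.add_comm 1 k]
  rfl

theorem stmt4 : ∀ m n : ℕ, 1 ≤ n → n < m →
    ∃ βs : List GLetter, βs ≠ [] ∧ (∀ b ∈ βs, b ≠ GLetter.a) ∧
      w m = (βs.map (fun b => w n ++ [b])).flatten ++ w n := by
  intro m n hn hnm
  induction m, hnm using Nat.le_induction with
  | base =>
    exact ⟨[alphaN n], by simp, by simpa using alphaN_ne_a n, by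
      rw [w_succ n hn]; simp⟩
  | succ m hm ih =>
    obtain ⟨βs, hne, ha, hw⟩ := ih
    refine ⟨βs ++ alphaN m :: βs, by simp, ?_, ?_⟩
    · intro b hb
      rcases List.mem_append.1 hb with h | h
      · exact ha b h
      · rcases List.mem_cons.1 h with rfl | h
        · exact alphaN_ne_a m
        · exact ha b h
    · rw [w_succ m (le_trans hn (le_of_lt hm)), hw]
      simp
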